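/- arXiv:2404.06001 — 4 statements merged into one kernel-verified Lean document; each statement's English description precedes it below -/
import Mathlib

section
/- Privacy amplification by subsampling: if A is (ε, δ)-DP, and B(D) = A(D_s) where D_s is obtained by including each record of D independently with probability q, then B satisfies (ε̃, δ̃)-DP with ε̃ = ln(1 + (e^ε − 1)q) and δ̃ = q·δ. -/
/-!
For `x ∉ D`, a Poisson subsample of `insert x D` is a subsample `S` of `D`, to which `x` is added
with probability `q`. So `B (insert x D)` averages `(1 - q) A S + q A (insert x S)` against the
same weights as `B D` averages `A S`, and both privacy inequalities reduce to the single pair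
`a = A S O`, `b = A (insert x S) O`. Write `t = e^ε` and `C = 1 + (t - 1) q`. One direction is
`(1 - q) a + q b ≤ (1 - q) a + q (t a + δ) = C a + q δ`. For the other, split
`a = (1 - μ) a + μ a` with `μ = q C / t` and bound only `μ a ≤ μ (t b + δ)`; then `μ t = C q`,
`μ ≤ q` since `C ≤ t`, and `1 - μ ≤ C (1 - q)` because `C (t (1 - q) + q) - t = (t - 1)² q (1 - q)`.
-/

open MeasureTheory Finset

open scoped ENNReal

section PoissonSubsampling

variable {X : Type*}

noncomputable def poissonWeight (q : ℝ) (D S : Finset X) : ℝ :=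
  q ^ S.card * (1 - q) ^ (D.card - S.card)

/-- Expectation of `f D_s` for the Poisson subsample `D_s` of `D` with rate `q`. -/
noncomputable def poissonExpect (q : ℝ) (D : Finset X) (f : Finset X → ℝ≥0∞) : ℝ≥0∞ :=
  ∑ S ∈ D.powerset, ENNReal.ofReal (poissonWeight q D S) * f S

theorem poissonWeight_nonneg {q : ℝ} (hq0 : 0 ≤ q) (hq1 : q ≤ 1) (D S : Finset X) :
    0 ≤ poissonWeight q D S :=
  mul_nonneg (pow_nonneg hq0 _) (pow_nonneg (sub_nonneg.2 hq1) _)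

theorem sum_poissonWeight (q : ℝ) (D : Finset X) :
    ∑ S ∈ D.powerset, poissonWeight q D S = 1 := by
  simp only [poissonWeight, sum_pow_mul_eq_add_pow, add_sub_cancel, one_pow]

theorem poissonExpect_le_mul_add {q : ℝ} (hq0 : 0 ≤ q) (hq1 : q ≤ 1) {D : Finset X}
    {f g : Finset X → ℝ≥0∞} {c d : ℝ≥0∞} (h : ∀ S ⊆ D, f S ≤ c * g S + d) :
    poissonExpect q D f ≤ c * poissonExpect q D g + d := by
  have hd : d = ∑ S ∈ D.powerset, ENNReal.ofReal (poissonWeight q D S) * d := by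
    rw [← sum_mul, ← ENNReal.ofReal_sum_of_nonneg fun S _ => poissonWeight_nonneg hq0 hq1 D S,
      sum_poissonWeight, ENNReal.ofReal_one, one_mul]
  rw [poissonExpect, poissonExpect, mul_sum, hd, ← sum_add_distrib]
  refine sum_le_sum fun S hS => ?_
  calc ENNReal.ofReal (poissonWeight q D S) * f S
      ≤ ENNReal.ofReal (poissonWeight q D S) * (c * g S + d) := by
        gcongr
        exact h S (mem_powerset.1 hS)
    _ = _ := by ring

variable [DecidableEq X]

theorem poissonWeight_insert_of_subset {q : ℝ} {x : X} {D S : Finset X} (hx : x ∉ D)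
    (hS : S ⊆ D) : poissonWeight q (insert x D) S = (1 - q) * poissonWeight q D S := by
  rw [poissonWeight, poissonWeight, card_insert_of_notMem hx,
    Nat.succ_sub (card_le_card hS), pow_succ]
  ring

theorem poissonWeight_insert_insert {q : ℝ} {x : X} {D S : Finset X} (hx : x ∉ D)
    (hS : S ⊆ D) : poissonWeight q (insert x D) (insert x S) = q * poissonWeight q D S := by
  rw [poissonWeight, poissonWeight, card_insert_of_notMem hx,
    card_insert_of_notMem (fun h => hx (hS h)), Nat.succ_sub_succ, pow_succ]
  ring

theorem poissonExpect_insert {q : ℝ} (hq0 : 0 ≤ q) (hq1 : q ≤ 1) {x : X} {D : Finset X}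
    (hx : x ∉ D) (f : Finset X → ℝ≥0∞) :
    poissonExpect q (insert x D) f =
      poissonExpect q D fun S =>
        ENNReal.ofReal (1 - q) * f S + ENNReal.ofReal q * f (insert x S) := by
  rw [poissonExpect, sum_powerset_insert hx, ← sum_add_distrib]
  refine sum_congr rfl fun S hS => ?_
  rw [mem_powerset] at hS
  rw [poissonWeight_insert_of_subset hx hS, poissonWeight_insert_insert hx hS,
    ENNReal.ofReal_mul (sub_nonneg.2 hq1), ENNReal.ofReal_mul hq0]
  ring

end PoissonSubsampling

section MixtureBounds

variable {a b d : ℝ≥0∞} {t q : ℝ}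

theorem ENNReal.le_convex_split_of_le_mul_add {μ : ℝ} (hμ0 : 0 ≤ μ) (hμ1 : μ ≤ 1)
    (h : a ≤ ENNReal.ofReal t * b + d) :
    a ≤ ENNReal.ofReal (1 - μ) * a + ENNReal.ofReal (μ * t) * b + ENNReal.ofReal μ * d :=
  calc a = ENNReal.ofReal (1 - μ) * a + ENNReal.ofReal μ * a := by
        rw [← add_mul, ← ENNReal.ofReal_add (sub_nonneg.2 hμ1) hμ0, sub_add_cancel,
          ENNReal.ofReal_one, one_mul]
    _ ≤ ENNReal.ofReal (1 - μ) * a + ENNReal.ofReal μ * (ENNReal.ofReal t * b + d) := by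
        gcongr
    _ = _ := by rw [ENNReal.ofReal_mul hμ0]; ring

theorem ENNReal.mix_le_of_le_mul_add (ht : 0 ≤ t) (hq0 : 0 ≤ q) (hq1 : q ≤ 1)
    (h : b ≤ ENNReal.ofReal t * a + d) :
    ENNReal.ofReal (1 - q) * a + ENNReal.ofReal q * b ≤
      ENNReal.ofReal (1 + (t - 1) * q) * a + ENNReal.ofReal q * d :=
  calc ENNReal.ofReal (1 - q) * a + ENNReal.ofReal q * b
      ≤ ENNReal.ofReal (1 - q) * a + ENNReal.ofReal q * (ENNReal.ofReal t * a + d) := by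
        gcongr
    _ = ENNReal.ofReal (1 - q + q * t) * a + ENNReal.ofReal q * d := by
        rw [ENNReal.ofReal_add (sub_nonneg.2 hq1) (mul_nonneg hq0 ht), ENNReal.ofReal_mul hq0]
        ring
    _ = _ := by ring_nf

theorem ENNReal.le_mix_of_le_mul_add (ht : 1 ≤ t) (hq0 : 0 ≤ q) (hq1 : q ≤ 1)
    (h : a ≤ ENNReal.ofReal t * b + d) :
    a ≤ ENNReal.ofReal (1 + (t - 1) * q) * (ENNReal.ofReal (1 - q) * a + ENNReal.ofReal q * b) +
      ENNReal.ofReal q * d := by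
  set C := 1 + (t - 1) * q
  have ht0 : 0 < t := one_pos.trans_le ht
  have hC0 : 0 ≤ C := by positivity
  have hCt : C ≤ t := by nlinarith
  set μ := q * C / t
  have hμt : μ * t = C * q := by rw [div_mul_cancel₀ _ ht0.ne', mul_comm]
  have hμq : μ ≤ q := div_le_of_le_mul₀ ht0.le hq0 (by nlinarith)
  have hμC : 1 - μ ≤ C * (1 - q) := by
    refine le_of_mul_le_mul_right ?_ ht0
    nlinarith [mul_nonneg (mul_nonneg (sq_nonneg (t - 1)) hq0) (sub_nonneg.2 hq1)]
  calc a ≤ ENNReal.ofReal (1 - μ) * a + ENNReal.ofReal (μ * t) * b + ENNReal.ofReal μ * d :=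
        ENNReal.le_convex_split_of_le_mul_add (by positivity) (hμq.trans hq1) h
    _ ≤ ENNReal.ofReal (C * (1 - q)) * a + ENNReal.ofReal (C * q) * b + ENNReal.ofReal q * d := by
        rw [hμt]
        gcongr
    _ = _ := by rw [ENNReal.ofReal_mul hC0, ENNReal.ofReal_mul hC0]; ring

end MixtureBounds

theorem subsampling_amplification_general {X Ω : Type*} [DecidableEq X] [MeasurableSpace Ω]
    (A : Finset X → Measure Ω) (ε δ q : ℝ) (hε : 0 ≤ ε)
    (hq0 : 0 ≤ q) (hq1 : q ≤ 1)
    -- A is (ε, δ)-DP under the add/remove-one-record neighboring relation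
    (hA : ∀ D D' : Finset X,
      ((∃ x ∉ D, D' = insert x D) ∨ (∃ x ∉ D', D = insert x D')) →
      ∀ O : Set Ω, MeasurableSet O →
        A D O ≤ ENNReal.ofReal (Real.exp ε) * A D' O + ENNReal.ofReal δ) :
    -- B(D) = A(D_s), with each record included independently with probability q,
    -- satisfies (ln(1 + (e^ε − 1)q), q·δ)-DP
    ∀ D D' : Finset X,
      ((∃ x ∉ D, D' = insert x D) ∨ (∃ x ∉ D', D = insert x D')) →
      ∀ O : Set Ω, MeasurableSet O →
        (∑ S ∈ D.powerset,
            ENNReal.ofReal (q ^ S.card * (1 - q) ^ (D.card - S.card)) * A S O) ≤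
          ENNReal.ofReal (Real.exp (Real.log (1 + (Real.exp ε - 1) * q))) *
            (∑ S ∈ D'.powerset,
              ENNReal.ofReal (q ^ S.card * (1 - q) ^ (D'.card - S.card)) * A S O) +
          ENNReal.ofReal (q * δ) := by
  intro D D' hDD' O hO
  have ht : 1 ≤ Real.exp ε := Real.one_le_exp hε
  have hC : 0 < 1 + (Real.exp ε - 1) * q := by positivity
  change poissonExpect q D (A · O) ≤ _ * poissonExpect q D' (A · O) + _
  rw [Real.exp_log hC, ENNReal.ofReal_mul hq0]
  rcases hDD' with ⟨x, hx, rfl⟩ | ⟨x, hx, rfl⟩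
  · rw [poissonExpect_insert hq0 hq1 hx]
    exact poissonExpect_le_mul_add hq0 hq1 fun S hS =>
      ENNReal.le_mix_of_le_mul_add ht hq0 hq1
        (hA S (insert x S) (Or.inl ⟨x, fun h => hx (hS h), rfl⟩) O hO)
  · rw [poissonExpect_insert hq0 hq1 hx]
    exact poissonExpect_le_mul_add hq0 hq1 fun S hS =>
      ENNReal.mix_le_of_le_mul_add (by positivity) hq0 hq1
        (hA (insert x S) S (Or.inr ⟨x, fun h => hx (hS h), rfl⟩) O hO)

/-- Privacy amplification by Poisson subsampling. -/
theorem subsampling_amplification {X Ω : Type*} [DecidableEq X] [MeasurableSpace Ω]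
    (A : Finset X → Measure Ω) (ε δ q : ℝ) (hε : 0 ≤ ε) (hδ : 0 ≤ δ)
    (hq0 : 0 ≤ q) (hq1 : q ≤ 1)
    -- A is (ε, δ)-DP under the add/remove-one-record neighboring relation
    (hA : ∀ D D' : Finset X,
      ((∃ x ∉ D, D' = insert x D) ∨ (∃ x ∉ D', D = insert x D')) →
      ∀ O : Set Ω, MeasurableSet O →
        A D O ≤ ENNReal.ofReal (Real.exp ε) * A D' O + ENNReal.ofReal δ) :
    -- B(D) = A(D_s), with each record included independently with probability q,
    -- satisfies (ln(1 + (e^ε − 1)q), q·δ)-DP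
    ∀ D D' : Finset X,
      ((∃ x ∉ D, D' = insert x D) ∨ (∃ x ∉ D', D = insert x D')) →
      ∀ O : Set Ω, MeasurableSet O →
        (∑ S ∈ D.powerset,
            ENNReal.ofReal (q ^ S.card * (1 - q) ^ (D.card - S.card)) * A S O) ≤
          ENNReal.ofReal (Real.exp (Real.log (1 + (Real.exp ε - 1) * q))) *
            (∑ S ∈ D'.powerset,
              ENNReal.ofReal (q ^ S.card * (1 - q) ^ (D'.card - S.card)) * A S O) +
          ENNReal.ofReal (q * δ) :=
  subsampling_amplification_general A ε δ q hε hq0 hq1 hA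
end

section
/- Exponential mechanism: selecting outcome r ∈ R with probability proportional to exp(ε·q(D, r)/(2·S(q))), where S(q) is the sensitivity of the quality function q, satisfies ε-differential privacy. -/
/-! Perturbing every score by at most `δ` changes the numerator `exp (f r)` of a Gibbs weight by a
factor at most `exp δ` and its normalizing sum by a factor at least `exp (-δ)`, so the weight
itself changes by a factor at most `exp (2 * δ)`. With scores `ε * q d r / (2 * Sq)`, neighboring
datasets give `δ = ε / 2`. -/

open Real Finset

theorem Real.exp_le_exp_mul_exp_of_abs_sub_le {x y δ : ℝ} (h : |x - y| ≤ δ) :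
    exp x ≤ exp δ * exp y := by
  rw [← exp_add]
  exact exp_le_exp.2 (by linarith [(abs_le.1 h).2])

theorem Real.exp_div_sum_exp_le_exp_mul {ι : Type*} [Fintype ι] {f g : ι → ℝ} {δ : ℝ}
    (h : ∀ i, |f i - g i| ≤ δ) (i : ι) :
    exp (f i) / ∑ j, exp (f j) ≤ exp (2 * δ) * (exp (g i) / ∑ j, exp (g j)) := by
  have hf : 0 < ∑ j, exp (f j) := sum_pos (fun j _ => exp_pos _) ⟨i, mem_univ i⟩
  have hg : 0 < ∑ j, exp (g j) := sum_pos (fun j _ => exp_pos _) ⟨i, mem_univ i⟩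
  have hsum : ∑ j, exp (g j) ≤ exp δ * ∑ j, exp (f j) := by
    rw [mul_sum]
    exact sum_le_sum fun j _ => exp_le_exp_mul_exp_of_abs_sub_le (by rw [abs_sub_comm]; exact h j)
  rw [div_le_iff₀ hf]
  calc exp (f i)
      ≤ exp δ * exp (g i) := exp_le_exp_mul_exp_of_abs_sub_le (h i)
    _ = exp δ * exp (g i) / (∑ j, exp (g j)) * ∑ j, exp (g j) :=
        (div_mul_cancel₀ _ hg.ne').symm
    _ ≤ exp δ * exp (g i) / (∑ j, exp (g j)) * (exp δ * ∑ j, exp (f j)) := by gcongr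
    _ = exp (2 * δ) * (exp (g i) / ∑ j, exp (g j)) * ∑ j, exp (f j) := by
        rw [two_mul, exp_add]; ring

theorem exponential_mechanism_dp_general {D R : Type*} [Fintype R]
    (Neighbor : D → D → Prop) (q : D → R → ℝ) (ε Sq : ℝ) (hε : 0 ≤ ε) (hS : 0 < Sq)
    -- Sq is the sensitivity of the quality function q
    (hsens : ∀ d d', Neighbor d d' → ∀ r, |q d r - q d' r| ≤ Sq) :
    ∀ d d', Neighbor d d' → ∀ r : R,
      Real.exp (ε * q d r / (2 * Sq)) / (∑ r' : R, Real.exp (ε * q d r' / (2 * Sq))) ≤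
        Real.exp ε *
          (Real.exp (ε * q d' r / (2 * Sq)) /
            (∑ r' : R, Real.exp (ε * q d' r' / (2 * Sq)))) := by
  intro d d' hN r
  have hscore : ∀ r, |ε * q d r / (2 * Sq) - ε * q d' r / (2 * Sq)| ≤ ε / 2 := fun r => by
    rw [← sub_div, ← mul_sub, abs_div, abs_mul, abs_of_nonneg hε,
      abs_of_pos (by positivity : (0 : ℝ) < 2 * Sq), div_le_iff₀ (by positivity)]
    calc ε * |q d r - q d' r| ≤ ε * Sq := mul_le_mul_of_nonneg_left (hsens d d' hN r) hε
      _ = ε / 2 * (2 * Sq) := by ring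
  simpa only [mul_div_cancel₀ ε two_ne_zero] using exp_div_sum_exp_le_exp_mul hscore r

/-- The exponential mechanism satisfies ε-differential privacy. -/
theorem exponential_mechanism_dp {D R : Type*} [Fintype R] [Nonempty R]
    (Neighbor : D → D → Prop) (q : D → R → ℝ) (ε Sq : ℝ) (hε : 0 ≤ ε) (hS : 0 < Sq)
    -- Sq is the sensitivity of the quality function q
    (hsens : ∀ d d', Neighbor d d' → ∀ r, |q d r - q d' r| ≤ Sq) :
    ∀ d d', Neighbor d d' → ∀ r : R,
      Real.exp (ε * q d r / (2 * Sq)) / (∑ r' : R, Real.exp (ε * q d r' / (2 * Sq))) ≤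
        Real.exp ε *
          (Real.exp (ε * q d' r / (2 * Sq)) /
            (∑ r' : R, Real.exp (ε * q d' r' / (2 * Sq)))) :=
  exponential_mechanism_dp_general Neighbor q ε Sq hε hS hsens
end

section
/- Report-noisy-max with Laplace noise on counts: given m counting queries each of sensitivity 1, adding independent Laplace(2/ε) noise to each count and releasing only the index of the maximum noisy count satisfies ε-differential privacy. -/
open MeasureTheory

open scoped ENNReal

/-! Shifting the noise of the candidate `j` alone by `+2` maps every noise vector on which `j`
wins for `d` to one on which `j` wins for `d'`, because each count moves by at most `1`.
Lebesgue measure is translation invariant, and the Laplace(2/ε) density loses at most a factor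
`exp ε` under a shift by `2` of one coordinate, so the winning probability for `d` is at most
`exp ε` times the one for `d'`. -/

theorem withDensity_le_mul_withDensity_of_measurePreserving {α : Type*} [MeasurableSpace α]
    {μ : Measure α} [SFinite μ] {g : α → ℝ≥0∞} (hg : Measurable g) {T : α → α}
    (hT : MeasurePreserving T μ μ) {C : ℝ≥0∞} (hgT : ∀ x, g x ≤ C * g (T x)) {s t : Set α}
    (ht : MeasurableSet t) (hst : s ⊆ T ⁻¹' t) :
    μ.withDensity g s ≤ C * μ.withDensity g t :=
  calc μ.withDensity g s = ∫⁻ x in s, g x ∂μ := withDensity_apply' g s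
    _ ≤ ∫⁻ x in s, C * g (T x) ∂μ := lintegral_mono hgT
    _ = C * ∫⁻ x in s, g (T x) ∂μ := lintegral_const_mul C (hg.comp hT.measurable)
    _ ≤ C * ∫⁻ x in T ⁻¹' t, g (T x) ∂μ := by gcongr
    _ = C * μ.withDensity g t := by
      rw [hT.setLIntegral_comp_preimage ht hg, withDensity_apply g ht]

theorem laplace_density_le_exp_mul_shift {ε : ℝ} (hε : 0 ≤ ε) (x a : ℝ) :
    ε / 4 * Real.exp (-(ε * |x|) / 2) ≤
      Real.exp (ε * |a| / 2) * (ε / 4 * Real.exp (-(ε * |x + a|) / 2)) := by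
  rw [mul_left_comm, ← Real.exp_add]
  have := mul_le_mul_of_nonneg_left (abs_add_le x a) hε
  gcongr
  linarith

theorem prod_le_mul_prod_add_single {ι M R : Type*} [Fintype ι] [DecidableEq ι] [AddZeroClass M]
    [CommSemiring R] [PartialOrder R] [IsOrderedRing R] {p : M → R} (hp : ∀ x, 0 ≤ p x) {K : R}
    {a : M} (hK : ∀ x, p x ≤ K * p (x + a)) (η : ι → M) (j : ι) :
    ∏ i, p (η i) ≤ K * ∏ i, p ((η + Pi.single j a : ι → M) i) := by
  simp only [Fintype.prod_eq_mul_prod_compl j, Pi.add_apply, Pi.single_eq_same, ← mul_assoc]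
  have hrest : ∏ i ∈ {j}ᶜ, p (η i) = ∏ i ∈ {j}ᶜ, p (η i + (Pi.single j a : ι → M) i) :=
    Finset.prod_congr rfl fun i hi => by
      rw [Pi.single_eq_of_ne (Finset.mem_compl.mp hi |> Finset.notMem_singleton.mp), add_zero]
  rw [hrest]
  exact mul_le_mul_of_nonneg_right (hK (η j)) (Finset.prod_nonneg fun i _ => hp _)

section NoisyMax

variable {ι : Type*}

def noisyMaxRegion (q : ι → ℝ) (j : ι) : Set (ι → ℝ) :=
  {η | ∀ i, i ≠ j → q i + η i < q j + η j}

theorem measurableSet_noisyMaxRegion [Countable ι] (q : ι → ℝ) (j : ι) :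
    MeasurableSet (noisyMaxRegion q j) := by
  rw [noisyMaxRegion, Set.ofPred_forall]
  refine MeasurableSet.iInter fun i => ?_
  rw [Set.ofPred_forall]
  exact MeasurableSet.iInter fun _ => measurableSet_lt (by fun_prop) (by fun_prop)

theorem noisyMaxRegion_subset_preimage_add_single [DecidableEq ι] {q q' : ι → ℝ} {Δ : ℝ}
    (hq : ∀ i, |q i - q' i| ≤ Δ) (j : ι) :
    noisyMaxRegion q j ⊆ (· + Pi.single j (2 * Δ)) ⁻¹' noisyMaxRegion q' j := by
  intro η hη i hij
  simp only [Pi.add_apply, Pi.single_eq_of_ne hij, Pi.single_eq_same, add_zero]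
  have := hη i hij
  have := abs_le.mp (hq i)
  have := abs_le.mp (hq j)
  linarith

end NoisyMax

/-- Report-noisy-max with Laplace(2/ε) noise on m counting queries of sensitivity 1
satisfies ε-differential privacy. -/
theorem report_noisy_max_dp {D : Type*} (Neighbor : D → D → Prop) (m : ℕ)
    (f : Fin m → D → ℤ) (ε : ℝ) (hε : 0 < ε)
    (hsens : ∀ i d d', Neighbor d d' → |f i d - f i d'| ≤ 1) :
    ∀ d d', Neighbor d d' → ∀ j : Fin m,
      (volume.withDensity fun η : Fin m → ℝ =>
          ENNReal.ofReal (∏ i, (ε / 4) * Real.exp (-(ε * |η i|) / 2)))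
        {η | ∀ i, i ≠ j → (f i d : ℝ) + η i < (f j d : ℝ) + η j} ≤
      ENNReal.ofReal (Real.exp ε) *
        (volume.withDensity fun η : Fin m → ℝ =>
            ENNReal.ofReal (∏ i, (ε / 4) * Real.exp (-(ε * |η i|) / 2)))
          {η | ∀ i, i ≠ j → (f i d' : ℝ) + η i < (f j d' : ℝ) + η j} := by
  intro d d' hN j
  have hq : ∀ i, |(f i d : ℝ) - f i d'| ≤ 1 := fun i => by exact_mod_cast hsens i d d' hN
  have hlaplace := (laplace_density_le_exp_mul_shift hε.le · (2 * 1))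
  have hshift : ε * |2 * 1| / 2 = ε := by norm_num
  rw [hshift] at hlaplace
  refine withDensity_le_mul_withDensity_of_measurePreserving (by fun_prop)
    (measurePreserving_add_right volume (Pi.single j (2 * 1))) (fun η => ?_)
    (measurableSet_noisyMaxRegion _ j) (noisyMaxRegion_subset_preimage_add_single hq j)
  rw [← ENNReal.ofReal_mul (Real.exp_nonneg ε)]
  exact ENNReal.ofReal_le_ofReal <| prod_le_mul_prod_add_single (fun x => by positivity) hlaplace η j
end

section
/- The exponential mechanism's utility guarantee: with probability at least 1 − |R|·exp(−ε·t/(2S(q))), the exponential mechanism outputs an r with q(D, r) ≥ OPT − t, where OPT = max_{r∈R} q(D, r). -/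
open Finset Real

/-! The optimum alone already contributes `exp (β · OPT)` to the normalising constant, while each
of the at most `|R|` outcomes of quality below `OPT - t` has weight at most `exp (β · (OPT - t))`;
so their total probability is at most `|R| · exp (-β t)`, with `β = ε / (2 S(q))`. -/

section Softmax

variable {ι : Type*} (s : Finset ι) (f : ι → ℝ) {β : ℝ}

lemma exp_mul_sup'_le_sum_exp (hs : s.Nonempty) :
    exp (β * s.sup' hs f) ≤ ∑ i ∈ s, exp (β * f i) := by
  obtain ⟨i, hi, hsup⟩ := exists_mem_eq_sup' hs f
  rw [hsup]
  exact single_le_sum (f := fun i => exp (β * f i)) (fun _ _ => (exp_pos _).le) hi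

lemma sum_filter_lt_exp_mul_le (hβ : 0 ≤ β) (c : ℝ) :
    ∑ i ∈ s with f i < c, exp (β * f i) ≤ #s * exp (β * c) := calc
  ∑ i ∈ s with f i < c, exp (β * f i) ≤ #{i ∈ s | f i < c} • exp (β * c) :=
    sum_le_card_nsmul _ _ _ fun i hi => exp_le_exp.mpr <|
      mul_le_mul_of_nonneg_left (mem_filter.mp hi).2.le hβ
  _ ≤ #s * exp (β * c) := by
    rw [nsmul_eq_mul]; gcongr; exact filter_subset _ s

theorem one_sub_card_mul_exp_le_sum_filter_softmax (hs : s.Nonempty) (hβ : 0 ≤ β) (t : ℝ) :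
    1 - #s * exp (-(β * t)) ≤
      ∑ i ∈ s with s.sup' hs f - t ≤ f i, exp (β * f i) / ∑ j ∈ s, exp (β * f j) := by
  set M := s.sup' hs f
  set Z := ∑ j ∈ s, exp (β * f j)
  have hZ : 0 < Z := sum_pos (fun _ _ => exp_pos _) hs
  have hsplit : ∑ i ∈ s with M - t ≤ f i, exp (β * f i) / Z
      + ∑ i ∈ s with f i < M - t, exp (β * f i) / Z = 1 := by
    simp_rw [← not_le]
    rw [sum_filter_add_sum_filter_not, ← sum_div, div_self hZ.ne']
  have hbad : ∑ i ∈ s with f i < M - t, exp (β * f i) / Z ≤ #s * exp (-(β * t)) := calc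
    _ = (∑ i ∈ s with f i < M - t, exp (β * f i)) / Z := (sum_div ..).symm
    _ ≤ #s * exp (β * (M - t)) / exp (β * M) :=
      div_le_div₀ (by positivity) (sum_filter_lt_exp_mul_le s f hβ _) (exp_pos _)
        (exp_mul_sup'_le_sum_exp s f hs)
    _ = #s * exp (-(β * t)) := by rw [mul_div_assoc, ← exp_sub]; ring_nf
  linarith

end Softmax

theorem exponential_mechanism_utility_general {D R : Type*} [Fintype R] [Nonempty R]
    (q : D → R → ℝ) (ε Sq t : ℝ) (hε : 0 < ε) (hS : 0 < Sq) (d : D) :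
    1 - (Fintype.card R : ℝ) * Real.exp (-(ε * t) / (2 * Sq)) ≤
      ∑ r ∈ univ.filter
          (fun r : R => (univ.sup' univ_nonempty (q d)) - t ≤ q d r),
        Real.exp (ε * q d r / (2 * Sq)) /
          (∑ r' : R, Real.exp (ε * q d r' / (2 * Sq))) := by
  have h := one_sub_card_mul_exp_le_sum_filter_softmax univ (q d) univ_nonempty
    (div_nonneg hε.le (by positivity : (0 : ℝ) ≤ 2 * Sq)) t
  simpa only [card_univ, div_mul_eq_mul_div, ← neg_div] using h

/-- Utility of the exponential mechanism: with probability at least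
1 − |R|·exp(−εt/(2S(q))), the output r has quality at least OPT − t. -/
theorem exponential_mechanism_utility {D R : Type*} [Fintype R] [Nonempty R]
    (q : D → R → ℝ) (ε Sq t : ℝ) (hε : 0 < ε) (hS : 0 < Sq) (ht : 0 ≤ t) (d : D) :
    1 - (Fintype.card R : ℝ) * Real.exp (-(ε * t) / (2 * Sq)) ≤
      ∑ r ∈ univ.filter
          (fun r : R => (univ.sup' univ_nonempty (q d)) - t ≤ q d r),
        Real.exp (ε * q d r / (2 * Sq)) /
          (∑ r' : R, Real.exp (ε * q d r' / (2 * Sq))) :=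
  exponential_mechanism_utility_general q ε Sq t hε hS d
end
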